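/- Let π, π' ∈ K_n with π ≠ π'. Then Tr[P^+_{π'} ρ^+_π] = 1/2 and Tr[P^−_{π'} ρ^+_π] = 1/2; i.e., measuring M_{π'} on ρ^+_π yields a uniformly random outcome. -/

import Mathlib

/-!
For even σ the vector ψ^+_π(σ) = (|σ⟩ + |σπ⟩)/√2 has one even and one odd component, because π,
a product of 2m + 1 disjoint transpositions, is odd. Among the even τ, the vector ψ^±_{π'}(τ) meets
it only for τ = σ (through |σ⟩) and for τ = σππ'⁻¹ (through |σπ⟩), each time with overlap of
modulus 1/2, and these two τ differ since π ≠ π'. So ‖P^±_{π'} ψ^+_π(σ)‖² = 1/2 for every even σ,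
and averaging over the n!/2 even σ gives Tr[P^±_{π'} ρ^+_π] = 1/2.
-/

noncomputable section

/-- The Hilbert space with orthonormal basis indexed by permutations of {1,…,n}. -/
abbrev HS (n : ℕ) := EuclideanSpace ℂ (Equiv.Perm (Fin n))

/-- The basis vector |σ⟩. -/
def ket {n : ℕ} (σ : Equiv.Perm (Fin n)) : HS n := EuclideanSpace.single σ 1

/-- |ψ^s_π(σ)⟩ = (|σ⟩ + s|σ∘π⟩)/√2, where s = ±1. -/
def psi {n : ℕ} (π : Equiv.Perm (Fin n)) (s : ℂ) (σ : Equiv.Perm (Fin n)) : HS n :=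
  ((Real.sqrt 2 : ℂ))⁻¹ • (ket σ + s • ket (σ * π))

/-- K_n: the fixed-point-free involutions. -/
def Kn (n : ℕ) : Set (Equiv.Perm (Fin n)) := {π | π * π = 1 ∧ ∀ i, π i ≠ i}

/-- The rank-one operator |x⟩⟨y|. -/
def outer {n : ℕ} (x y : HS n) : HS n →ₗ[ℂ] HS n where
  toFun z := (inner ℂ y z : ℂ) • x
  map_add' a b := by simp [inner_add_right, add_smul]
  map_smul' c a := by simp [inner_smul_right, mul_smul]

open Finset in
/-- The even permutations, as a finset. -/
def evens (n : ℕ) : Finset (Equiv.Perm (Fin n)) :=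
  univ.filter (fun σ => Equiv.Perm.sign σ = 1)

/-- ρ^s_π = (2/n!) Σ_{σ even} |ψ^s_π(σ)⟩⟨ψ^s_π(σ)|, s = ±1. -/
def rho {n : ℕ} (π : Equiv.Perm (Fin n)) (s : ℂ) : HS n →ₗ[ℂ] HS n :=
  ((2 : ℂ) / (Nat.factorial n)) • ∑ σ ∈ evens n, outer (psi π s σ) (psi π s σ)

/-- P^s_π = Σ_{σ even} |ψ^s_π(σ)⟩⟨ψ^s_π(σ)|, s = ±1. -/
def Pproj {n : ℕ} (π : Equiv.Perm (Fin n)) (s : ℂ) : HS n →ₗ[ℂ] HS n :=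
  ∑ σ ∈ evens n, outer (psi π s σ) (psi π s σ)

open scoped InnerProductSpace ComplexConjugate

section

variable {n : ℕ}

lemma sign_eq_neg_one_pow_of_mem_Kn {π : Equiv.Perm (Fin n)} (hπ : π ∈ Kn n) :
    Equiv.Perm.sign π = (-1) ^ (n / 2) := by
  have hfix : Fintype.card (Function.fixedPoints π) = 0 :=
    Fintype.card_eq_zero_iff.2 ⟨fun ⟨i, hi⟩ => hπ.2 i hi⟩
  rw [Equiv.Perm.sign_of_pow_two_eq_one (by rw [sq]; exact hπ.1), hfix, Fintype.card_fin,
    Nat.sub_zero]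

@[simp] lemma mem_evens {σ : Equiv.Perm (Fin n)} : σ ∈ evens n ↔ Equiv.Perm.sign σ = 1 := by
  simp [evens]

lemma two_mul_card_evens [Nontrivial (Fin n)] : 2 * (evens n).card = n.factorial := by
  have hcard : (evens n).card = Fintype.card (alternatingGroup (Fin n)) := by
    rw [evens, ← Fintype.card_subtype]
    exact Fintype.card_congr (Equiv.subtypeEquivRight fun σ =>
      Equiv.Perm.mem_alternatingGroup.symm)
  rw [hcard, two_mul_card_alternatingGroup, Fintype.card_perm, Fintype.card_fin]

@[simp] lemma outer_apply (x y z : HS n) : outer x y z = ⟪y, z⟫_ℂ • x := rfl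

lemma outer_comp_outer (x y a b : HS n) :
    outer x y ∘ₗ outer a b = ⟪y, a⟫_ℂ • outer x b := by
  ext z
  simp only [LinearMap.coe_comp, Function.comp_apply, outer_apply, inner_smul_right,
    LinearMap.smul_apply, smul_smul, mul_comm]

lemma trace_outer (x y : HS n) : LinearMap.trace ℂ (HS n) (outer x y) = ⟪y, x⟫_ℂ := by
  rw [LinearMap.trace_eq_matrix_trace ℂ (PiLp.basisFun 2 ℂ (Equiv.Perm (Fin n)))]
  simp [Matrix.trace, LinearMap.toMatrix_apply, outer, PiLp.inner_apply, mul_comm]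

lemma trace_sum_outer_comp_sum_outer {ι κ : Type*} (s : Finset ι) (t : Finset κ)
    (x : ι → HS n) (y : κ → HS n) :
    LinearMap.trace ℂ (HS n) ((∑ i ∈ s, outer (x i) (x i)) ∘ₗ ∑ j ∈ t, outer (y j) (y j)) =
      ∑ i ∈ s, ∑ j ∈ t, ⟪x i, y j⟫_ℂ * ⟪y j, x i⟫_ℂ := by
  rw [← Module.End.mul_eq_comp, Finset.sum_mul_sum]
  simp only [Module.End.mul_eq_comp, outer_comp_outer, map_sum, map_smul, trace_outer, smul_eq_mul]

lemma inner_ket (a b : Equiv.Perm (Fin n)) :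
    ⟪ket a, ket b⟫_ℂ = if a = b then 1 else 0 := by
  simp [ket, EuclideanSpace.inner_single_left, PiLp.single_apply]

lemma inner_psi (π π' : Equiv.Perm (Fin n)) (r s : ℂ) (σ τ : Equiv.Perm (Fin n)) :
    ⟪psi π' s τ, psi π r σ⟫_ℂ =
      2⁻¹ * ((if τ = σ then 1 else 0) + r * (if τ = σ * π then 1 else 0) +
        conj s * (if τ * π' = σ then 1 else 0) +
        conj s * r * (if τ * π' = σ * π then 1 else 0)) := by
  have hsqrt : conj ((Real.sqrt 2 : ℂ))⁻¹ * ((Real.sqrt 2 : ℂ))⁻¹ = 2⁻¹ := by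
    rw [map_inv₀, Complex.conj_ofReal, ← mul_inv, ← Complex.ofReal_mul,
      Real.mul_self_sqrt zero_le_two, Complex.ofReal_ofNat]
  simp only [psi, inner_smul_left, inner_smul_right, inner_add_left, inner_add_right,
    inner_ket]
  rw [← hsqrt]
  ring

lemma sign_mul_ne_of_sign_eq_neg_one (σ : Equiv.Perm (Fin n)) {π : Equiv.Perm (Fin n)}
    (hπ : Equiv.Perm.sign π = -1) : Equiv.Perm.sign (σ * π) ≠ Equiv.Perm.sign σ := by
  rw [map_mul, hπ, mul_neg_one]
  exact neg_units_ne_self _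

lemma inner_psi_of_sign_eq {π π' σ τ : Equiv.Perm (Fin n)}
    (hτ : Equiv.Perm.sign τ = Equiv.Perm.sign σ) (hπ : Equiv.Perm.sign π = -1)
    (hπ' : Equiv.Perm.sign π' = -1) (r s : ℂ) :
    ⟪psi π' s τ, psi π r σ⟫_ℂ =
      2⁻¹ * ((if τ = σ then 1 else 0) + conj s * r * (if τ = σ * π * π'⁻¹ then 1 else 0)) := by
  have hτσπ : τ ≠ σ * π := fun h => sign_mul_ne_of_sign_eq_neg_one σ hπ (by rwa [← h])
  have hτπ'σ : τ * π' ≠ σ := fun h => sign_mul_ne_of_sign_eq_neg_one τ hπ' (by rw [h, hτ])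
  rw [inner_psi, if_neg hτσπ, if_neg hτπ'σ]
  simp only [← eq_mul_inv_iff_mul_eq]
  ring

lemma sum_inner_psi_mul_inner_psi {π π' σ : Equiv.Perm (Fin n)}
    (hσ : Equiv.Perm.sign σ = 1) (hπ : Equiv.Perm.sign π = -1) (hπ' : Equiv.Perm.sign π' = -1)
    (hne : π ≠ π') {r s : ℂ} (hr : ‖r‖ = 1) (hs : ‖s‖ = 1) :
    ∑ τ ∈ evens n, ⟪psi π' s τ, psi π r σ⟫_ℂ * ⟪psi π r σ, psi π' s τ⟫_ℂ = 1 / 2 := by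
  obtain ⟨t, ht⟩ : ∃ t, σ * π * π'⁻¹ = t := ⟨_, rfl⟩
  have hσt : σ ≠ t := by simpa [← ht, mul_assoc, mul_inv_eq_one] using hne
  have hs' : s * conj s = 1 := by rw [Complex.mul_conj', hs]; norm_num
  have hr' : r * conj r = 1 := by rw [Complex.mul_conj', hr]; norm_num
  have hterm : ∀ τ ∈ evens n, ⟪psi π' s τ, psi π r σ⟫_ℂ * ⟪psi π r σ, psi π' s τ⟫_ℂ =
      4⁻¹ * ((if τ = σ then 1 else 0) + (if τ = t then 1 else 0)) := by
    intro τ hτ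
    rw [← inner_conj_symm (psi π r σ), inner_psi_of_sign_eq ((mem_evens.1 hτ).trans hσ.symm) hπ hπ',
      ht]
    split_ifs with h₁ h₂
    · exact absurd (h₁.symm.trans h₂) hσt
    all_goals simp only [map_mul, map_inv₀, map_ofNat, map_zero, Complex.conj_conj, mul_one,
      mul_zero, add_zero, zero_add]
    · ring
    · linear_combination (4 : ℂ)⁻¹ * (r * conj r) * hs' + (4 : ℂ)⁻¹ * hr'
  have hσ_mem : σ ∈ evens n := mem_evens.2 hσ
  have ht_mem : t ∈ evens n := by simp [← ht, hσ, hπ, hπ']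
  rw [Finset.sum_congr rfl hterm, ← Finset.mul_sum, Finset.sum_add_distrib,
    Finset.sum_ite_eq' _ _ _, Finset.sum_ite_eq' _ _ _, if_pos hσ_mem, if_pos ht_mem]
  norm_num

lemma trace_Pproj_comp_rho {π π' : Equiv.Perm (Fin n)}
    (hπ : Equiv.Perm.sign π = -1) (hπ' : Equiv.Perm.sign π' = -1) (hne : π ≠ π') {r s : ℂ}
    (hr : ‖r‖ = 1) (hs : ‖s‖ = 1) :
    LinearMap.trace ℂ (HS n) (Pproj π' s ∘ₗ rho π r) = 1 / 2 := by
  have : Nontrivial (Fin n) := by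
    by_contra h
    have : Subsingleton (Fin n) := not_nontrivial_iff_subsingleton.1 h
    simp [Subsingleton.elim π 1] at hπ
  have hcard : (n.factorial : ℂ) = 2 * (evens n).card := mod_cast two_mul_card_evens.symm
  rw [rho, LinearMap.comp_smul, map_smul, Pproj, trace_sum_outer_comp_sum_outer, Finset.sum_comm,
    Finset.sum_congr rfl fun σ hσ =>
      sum_inner_psi_mul_inner_psi (mem_evens.1 hσ) hπ hπ' hne hr hs,
    Finset.sum_const, nsmul_eq_mul, hcard, smul_eq_mul]
  have : ((evens n).card : ℂ) ≠ 0 := by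
    exact_mod_cast ((evens n).card_pos.2 ⟨1, by simp⟩).ne'
  field_simp

end

/-- For distinct π, π' ∈ K_n, measuring M_{π'} on ρ^+_π gives a uniformly random
outcome: Tr[P^+_{π'} ρ^+_π] = 1/2 and Tr[P^-_{π'} ρ^+_π] = 1/2. -/
theorem measurement_wrong_trapdoor_uniform (n m : ℕ) (hn : n = 2 * (2 * m + 1))
    (π π' : Equiv.Perm (Fin n)) (hπ : π ∈ Kn n) (hπ' : π' ∈ Kn n) (hne : π ≠ π') :
    LinearMap.trace ℂ (HS n) (Pproj π' 1 ∘ₗ rho π 1) = 1 / 2 ∧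
    LinearMap.trace ℂ (HS n) (Pproj π' (-1) ∘ₗ rho π 1) = 1 / 2 := by
  have hodd : ∀ ρ ∈ Kn n, Equiv.Perm.sign ρ = -1 := fun ρ hρ => by
    rw [sign_eq_neg_one_pow_of_mem_Kn hρ, hn, Nat.mul_div_cancel_left _ two_pos]
    exact Odd.neg_one_pow ⟨m, rfl⟩
  exact ⟨trace_Pproj_comp_rho (hodd π hπ) (hodd π' hπ') hne (by simp) (by simp),
    trace_Pproj_comp_rho (hodd π hπ) (hodd π' hπ') hne (by simp) (by simp)⟩
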